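/- arXiv:2308.10479 — 2 statements merged into one kernel-verified Lean document; each statement's English description precedes it below -/
import Mathlib

section
/- For all d ∈ ℕ and 0 ≤ k < d, there exists an infinite sequence {F_n} of families of axis-parallel boxes in ℝ^d such that: (1) no F_n can be pierced by finitely many axis-parallel k-flats; and (2) every sequence {B_n} with B_n ∈ F_n for all n contains two distinct boxes B_i, B_j that can both be intersected by a single axis-parallel k-flat. -/
/-!
Take a dense sequence `q` in `ℝ^d` and let `F_n` consist of the cubes
`[q_n - s, q_n - s/2]^d` for the scales `s = 2^{-(n+2m)}`, `m ∈ ℕ`. Within one family the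
projections of the cubes to any coordinate axis are pairwise disjoint, and a `k`-flat with
`k < d` fixes some coordinate, so it meets at most one cube of `F_n`; hence no finite set of
flats pierces `F_n`. Conversely, given a selection `B_n ∈ F_n`, density of `q` together with
`2^{-(n+2m)} ≤ 2^{-n}` yields some `j ≠ 0` whose cube `B_j` meets `B_0`, and any `k`-flat
through a common point meets both.
-/

open Set

/-- An axis-parallel box in `ℝ^d`: a product of closed bounded intervals. -/
def IsBox {d : ℕ} (B : Set (Fin d → ℝ)) : Prop :=
  ∃ a b : Fin d → ℝ, (∀ i, a i ≤ b i) ∧ B = {x | ∀ i, x i ∈ Set.Icc (a i) (b i)}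

/-- An axis-parallel `k`-flat in `ℝ^d`: coordinates in a set `I` of size `d - k` are fixed. -/
def IsAxisFlat {d : ℕ} (k : ℕ) (K : Set (Fin d → ℝ)) : Prop :=
  ∃ (I : Finset (Fin d)) (c : Fin d → ℝ), I.card = d - k ∧ K = {x | ∀ i ∈ I, x i = c i}

/-- An axis-parallel hyperplane in `ℝ^d`. -/
def IsAxisHyperplane {d : ℕ} (H : Set (Fin d → ℝ)) : Prop :=
  ∃ (i : Fin d) (c : ℝ), H = {x | x i = c}

/-- `F` is pierceable by finitely many axis-parallel `k`-flats. -/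
def PiercedByFlats {d : ℕ} (k : ℕ) (F : Set (Set (Fin d → ℝ))) : Prop :=
  ∃ K : Finset (Set (Fin d → ℝ)), (∀ f ∈ K, IsAxisFlat k f) ∧
    ∀ B ∈ F, ∃ f ∈ K, (B ∩ f).Nonempty

/-- `F` is pierceable by finitely many axis-parallel hyperplanes. -/
def PiercedByHyperplanes {d : ℕ} (F : Set (Set (Fin d → ℝ))) : Prop :=
  ∃ H : Finset (Set (Fin d → ℝ)), (∀ h ∈ H, IsAxisHyperplane h) ∧
    ∀ B ∈ F, ∃ h ∈ H, (B ∩ h).Nonempty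

open Filter Topology

theorem DenseRange.exists_gt_mem_of_isOpen {X : Type*} [TopologicalSpace X] [T1Space X]
    [∀ x : X, NeBot (𝓝[≠] x)] {q : ℕ → X} (hq : DenseRange q) {U : Set X} (hU : IsOpen U)
    (hne : U.Nonempty) (N : ℕ) : ∃ j, N < j ∧ q j ∈ U := by
  obtain ⟨_, ⟨⟨j, rfl⟩, hj⟩, hjU⟩ :=
    (hq.sdiff_finite ((finite_Iic N).image q)).exists_mem_open hU hne
  exact ⟨j, not_le.mp fun h => hj (mem_image_of_mem q h), hjU⟩

section Flats

variable {d k : ℕ}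

theorem IsAxisFlat.exists_coord_eq (hk : k < d) {K : Set (Fin d → ℝ)} (hK : IsAxisFlat k K) :
    ∃ i c, ∀ x ∈ K, x i = c := by
  obtain ⟨I, c, hI, rfl⟩ := hK
  obtain ⟨i, hi⟩ := Finset.card_pos.mp (show 0 < I.card by omega)
  exact ⟨i, c i, fun x hx => hx i hi⟩

theorem exists_isAxisFlat_mem (x : Fin d → ℝ) :
    ∃ K, IsAxisFlat k K ∧ x ∈ K := by
  obtain ⟨I, -, hI⟩ := Finset.exists_subset_card_eq (s := (Finset.univ : Finset (Fin d)))
    (n := d - k) (by simp)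
  exact ⟨_, ⟨I, x, hI, rfl⟩, fun _ _ => rfl⟩

theorem not_piercedByFlats_range {ι : Type*} [Infinite ι] {S : ι → Set (Fin d → ℝ)}
    (hS : ∀ K, IsAxisFlat k K → {m | (S m ∩ K).Nonempty}.Subsingleton) :
    ¬ PiercedByFlats k (range S) := by
  rintro ⟨K, hK, hpierce⟩
  choose f hfK hf using fun m => hpierce (S m) (mem_range_self m)
  obtain ⟨m, m', hne, heq⟩ := Finite.exists_ne_map_eq_of_infinite fun m => (⟨f m, hfK m⟩ : K)
  have heq : f m = f m' := congrArg Subtype.val heq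
  exact hne (hS (f m) (hK _ (hfK m)) (hf m) (heq ▸ hf m'))

end Flats

section Boxes

variable {d : ℕ}

def lowerBox {ι : Type*} (q : ι → ℝ) (s : ℝ) : Set (ι → ℝ) :=
  Icc (fun i => q i - s) (fun i => q i - s / 2)

theorem isBox_lowerBox (q : Fin d → ℝ) {s : ℝ} (hs : 0 ≤ s) : IsBox (lowerBox q s) :=
  ⟨fun i => q i - s, fun i => q i - s / 2, fun i => by linarith,
    by ext x; simp [lowerBox, Pi.le_def, forall_and]⟩

theorem lowerCorner_mem_lowerBox {ι : Type*} (q : ι → ℝ) {s : ℝ} (hs : 0 ≤ s) :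
    (fun i => q i - s) ∈ lowerBox q s :=
  left_mem_Icc.mpr fun i => by linarith

theorem apply_lt_of_mem_lowerBox {ι : Type*} {q x y : ι → ℝ} {s t : ℝ} (hts : t < s / 2)
    (hx : x ∈ lowerBox q s) (hy : y ∈ lowerBox q t) (i : ι) : x i < y i := by
  linarith [hx.2 i, hy.1 i]

end Boxes

noncomputable def scale (n m : ℕ) : ℝ := 2⁻¹ ^ (n + 2 * m)

theorem scale_pos (n m : ℕ) : 0 < scale n m := by
  unfold scale; positivity

theorem scale_lt_half {n m m' : ℕ} (h : m < m') : scale n m' < scale n m / 2 :=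
  calc scale n m' ≤ 2⁻¹ ^ (n + 2 * m + 2) :=
        pow_le_pow_of_le_one (by norm_num) (by norm_num) (by omega)
    _ = scale n m / 4 := by rw [scale, pow_add]; ring
    _ < scale n m / 2 := by linarith [scale_pos n m]

theorem exists_forall_scale_lt {δ : ℝ} (hδ : 0 < δ) : ∃ N, ∀ n ≥ N, ∀ m, scale n m < δ := by
  obtain ⟨N, hN⟩ := exists_pow_lt_of_lt_one hδ (show (2⁻¹ : ℝ) < 1 by norm_num)
  refine ⟨N, fun n hn m => lt_of_le_of_lt ?_ hN⟩
  exact pow_le_pow_of_le_one (by norm_num) (by norm_num) (by omega)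

def boxFamily {d : ℕ} (q : ℕ → Fin d → ℝ) (n : ℕ) : Set (Set (Fin d → ℝ)) :=
  range fun m => lowerBox (q n) (scale n m)

theorem not_piercedByFlats_boxFamily {d k : ℕ} (hk : k < d) (q : ℕ → Fin d → ℝ) (n : ℕ) :
    ¬ PiercedByFlats k (boxFamily q n) := by
  refine not_piercedByFlats_range fun K hK => ?_
  obtain ⟨i, c, hc⟩ := hK.exists_coord_eq hk
  have hdisj : ∀ {m m'}, m < m' → (lowerBox (q n) (scale n m) ∩ K).Nonempty →
      (lowerBox (q n) (scale n m') ∩ K).Nonempty → False := by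
    rintro m m' h ⟨x, hx, hxK⟩ ⟨y, hy, hyK⟩
    have := apply_lt_of_mem_lowerBox (scale_lt_half h) hx hy i
    rw [hc x hxK, hc y hyK] at this
    exact lt_irrefl c this
  intro m hm m' hm'
  by_contra hne
  rcases Ne.lt_or_gt hne with h | h
  exacts [hdisj h hm hm', hdisj h hm' hm]

theorem exists_ne_inter_lowerBox_nonempty {d : ℕ} [NeZero d] {q : ℕ → Fin d → ℝ}
    (hq : DenseRange q) (μ : ℕ → ℕ) (n : ℕ) :
    ∃ j ≠ n, (lowerBox (q j) (scale j (μ j)) ∩ lowerBox (q n) (scale n (μ n))).Nonempty := by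
  set s := scale n (μ n)
  have hs : 0 < s := scale_pos n (μ n)
  obtain ⟨N, hN⟩ := exists_forall_scale_lt (show 0 < s / 4 by positivity)
  -- if `q j ∈ U` and `scale j _ < s / 4`, the lower corner of the `j`-th cube lies in the `n`-th
  set U : Set (Fin d → ℝ) := univ.pi fun i => Ioo (q n i - s + s / 4) (q n i - s / 2)
  have hU : IsOpen U := isOpen_set_pi finite_univ fun _ _ => isOpen_Ioo
  have hUne : U.Nonempty := univ_pi_nonempty_iff.mpr fun i => nonempty_Ioo.mpr (by linarith)
  obtain ⟨j, hj, hjU⟩ := hq.exists_gt_mem_of_isOpen hU hUne (max N n)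
  have ht := scale_pos j (μ j)
  have hts := hN j (by omega) (μ j)
  refine ⟨j, by omega, _, lowerCorner_mem_lowerBox _ ht.le, fun i => ?_, fun i => ?_⟩ <;>
  · have := hjU i (mem_univ i)
    simp only [mem_Ioo] at this
    linarith

theorem stmt15 (d k : ℕ) (hk : k < d) :
    ∃ F : ℕ → Set (Set (Fin d → ℝ)),
      (∀ n, ∀ B ∈ F n, IsBox B) ∧
      (∀ n, ¬ PiercedByFlats k (F n)) ∧
      (∀ B : ℕ → Set (Fin d → ℝ), (∀ n, B n ∈ F n) →
        ∃ i j : ℕ, i ≠ j ∧ ∃ K, IsAxisFlat k K ∧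
          (K ∩ B i).Nonempty ∧ (K ∩ B j).Nonempty) := by
  have : NeZero d := ⟨by omega⟩
  obtain ⟨q, hq⟩ := TopologicalSpace.exists_dense_seq (Fin d → ℝ)
  refine ⟨boxFamily q, ?_, not_piercedByFlats_boxFamily hk q, fun B hB => ?_⟩
  · rintro n _ ⟨m, rfl⟩
    exact isBox_lowerBox _ (scale_pos n m).le
  choose μ hμ using hB
  obtain ⟨j, hj, x, hxj, hx0⟩ := exists_ne_inter_lowerBox_nonempty hq μ 0
  obtain ⟨K, hK, hxK⟩ := exists_isAxisFlat_mem (k := k) x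
  refine ⟨0, j, hj.symm, K, hK, ⟨x, hxK, ?_⟩, ⟨x, hxK, ?_⟩⟩
  · rwa [← hμ 0]
  · rwa [← hμ j]
end

section
/- Let F be an infinite family of axis-parallel rectangles in ℝ² such that F cannot be pierced by any finite set of axis-parallel lines. Then F contains an infinite sequence of rectangles R₁, R₂, … such that for all i ≠ j and both coordinates t ∈ {1,2}, the projections π_t(R_i) and π_t(R_j) are disjoint (hence no axis-parallel line meets two of them, and in particular the R_i are pairwise disjoint). -/
open Set

/-!
The families whose complement in `F` can be pierced by finitely many lines form a proper
filter on the rectangles of `F`; refine it to an ultrafilter `U`, so that no `U`-large family is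
pierceable. In each coordinate no single point lies in the projections of `U`-almost all
rectangles, and a cut argument then shows that `U`-almost every rectangle has projections
disjoint from those of `U`-almost all others. Choosing each `Rₙ₊₁` in the `U`-large set of
rectangles separated from `R₀, …, Rₙ` produces the sequence.
-/

namespace Filter

theorem exists_seq_forall_lt_of_eventually_eventually {α : Type*} {f : Filter α} [f.NeBot]
    {r : α → α → Prop} (h : ∀ᶠ x in f, ∀ᶠ y in f, r x y) :
    ∃ u : ℕ → α, ∀ i j, i < j → r (u i) (u j) := by
  have hnext : ∀ s : {s : Set α // s ∈ f}, ∃ x ∈ s.1, ∀ᶠ y in f, r x y := fun s =>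
    nonempty_of_mem (inter_mem s.2 h)
  choose next hnext_mem hnext_rel using hnext
  let A : ℕ → {s : Set α // s ∈ f} := fun n => Nat.rec ⟨univ, univ_mem⟩
    (fun _ s => ⟨s.1 ∩ {y | r (next s) y}, inter_mem s.2 (hnext_rel s)⟩) n
  have hA : Antitone fun n => (A n).1 := antitone_nat_of_succ_le fun _ => inter_subset_left
  refine ⟨fun n => next (A n), fun i j hij => ?_⟩
  have : next (A j) ∈ (A (i + 1)).1 := hA hij (hnext_mem (A j))
  exact this.2

theorem exists_ultrafilter_mem_forall_not {α : Type*} {p : Set α → Prop} (he : p ∅)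
    (hmono : ∀ t, p t → ∀ s ⊆ t, p s) (hunion : ∀ s, p s → ∀ t, p t → p (s ∪ t))
    {F : Set α} (hF : ¬ p F) : ∃ U : Ultrafilter α, F ∈ U ∧ ∀ A ∈ U, ¬ p A := by
  let L := comk (fun s => p (F ∩ s)) (by simpa using he)
    (fun t ht s hst => hmono _ ht _ (inter_subset_inter_right F hst))
    (fun s hs t ht => by simpa only [inter_union_distrib_left] using hunion _ hs _ ht)
  have : L.NeBot := ⟨fun hbot => hF (by simpa [L] using (hbot ▸ mem_bot : ∅ ∈ L))⟩
  refine ⟨Ultrafilter.of L, Ultrafilter.of_le L (by simpa [L] using he), fun A hA hpA => ?_⟩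
  have hAc : Aᶜ ∈ Ultrafilter.of L :=
    Ultrafilter.of_le L (by simpa [L] using hmono _ hpA _ inter_subset_right)
  exact (Ultrafilter.of L).compl_notMem_iff.2 hA hAc

end Filter

theorem Ultrafilter.eventually_eventually_disjoint_Icc {X α : Type*}
    [ConditionallyCompleteLinearOrder α] (U : Ultrafilter X) (f g : X → α)
    (h : ∀ c, ¬ ∀ᶠ x in U, c ∈ Icc (f x) (g x)) :
    ∀ᶠ x in U, ∀ᶠ y in U, Disjoint (Icc (f x) (g x)) (Icc (f y) (g y)) := by
  have hsplit : ∀ c, (∀ᶠ y in U, g y < c) ∨ ∀ᶠ y in U, c < f y := fun c =>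
    U.eventually_or.1 <| (U.eventually_not.2 (h c)).mono fun y hy => by
      rw [mem_Icc, not_and_or, not_le, not_le] at hy
      exact hy.symm
  set C : Set α := {c | ∀ᶠ y in U, g y < c}
  have hC : IsUpperSet C := fun c c' hcc' hc => hc.mono fun y hy => hy.trans_le hcc'
  suffices ∀ᶠ x in U, (∀ᶠ y in U, g y < f x) ∨ ∀ᶠ y in U, g x < f y by
    refine this.mono fun x hx => (U.eventually_or.2 hx).mono fun y hy => ?_
    refine disjoint_left.2 fun z hzx hzy => ?_
    rcases hy with hy | hy
    exacts [(hzy.2.trans_lt hy).not_ge hzx.1, (hzx.2.trans_lt hy).not_ge hzy.1]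
  by_cases hf : ∀ᶠ x in U, f x ∈ C
  · exact hf.mono fun x hx => Or.inl hx
  by_cases hg : ∀ᶠ x in U, g x ∉ C
  · exact hg.mono fun x hx => Or.inr ((hsplit (g x)).resolve_left hx)
  -- Otherwise every `f x` is a lower bound and every `g x` an element of the up-set `C`,
  -- so `sInf C` lies in eventually all the intervals.
  have hf' : ∀ᶠ x in U, f x ∉ C := U.eventually_not.2 hf
  have hg' : ∀ᶠ x in U, g x ∈ C := (U.eventually_not.2 hg).mono fun x => not_not.1
  have hlb : ∀ x, f x ∉ C → f x ∈ lowerBounds C := fun x hx c hc =>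
    le_of_not_ge fun hcx => hx (hC hcx hc)
  obtain ⟨x₀, hfx₀, hgx₀⟩ := (hf'.and hg').exists
  refine (h (sInf C) ?_).elim
  filter_upwards [hf', hg'] with x hfx hgx
  exact ⟨le_csInf ⟨_, hgx₀⟩ (hlb x hfx), csInf_le ⟨_, hlb x₀ hfx₀⟩ hgx⟩

section Piercing

variable {d : ℕ}

theorem piercedByHyperplanes_empty : PiercedByHyperplanes (∅ : Set (Set (Fin d → ℝ))) :=
  ⟨∅, by simp, by simp⟩

theorem PiercedByHyperplanes.mono {s t : Set (Set (Fin d → ℝ))} (ht : PiercedByHyperplanes t)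
    (hst : s ⊆ t) : PiercedByHyperplanes s :=
  let ⟨H, hH, hpierce⟩ := ht
  ⟨H, hH, fun B hB => hpierce B (hst hB)⟩

theorem PiercedByHyperplanes.union {s t : Set (Set (Fin d → ℝ))} (hs : PiercedByHyperplanes s)
    (ht : PiercedByHyperplanes t) : PiercedByHyperplanes (s ∪ t) := by
  classical
  obtain ⟨H, hH, hsH⟩ := hs
  obtain ⟨H', hH', htH'⟩ := ht
  refine ⟨H ∪ H', fun h hh => (Finset.mem_union.1 hh).elim (hH h) (hH' h), ?_⟩
  rintro B (hB | hB)
  · obtain ⟨h, hh, hBh⟩ := hsH B hB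
    exact ⟨h, Finset.mem_union_left _ hh, hBh⟩
  · obtain ⟨h, hh, hBh⟩ := htH' B hB
    exact ⟨h, Finset.mem_union_right _ hh, hBh⟩

theorem piercedByHyperplanes_setOf_mem_image_eval (t : Fin d) (c : ℝ) :
    PiercedByHyperplanes {B : Set (Fin d → ℝ) | c ∈ (fun x => x t) '' B} := by
  refine ⟨{{x | x t = c}}, by simpa using ⟨t, c, rfl⟩, fun B hB => ?_⟩
  obtain ⟨x, hxB, hxc⟩ := hB
  exact ⟨_, Finset.mem_singleton_self _, x, hxB, hxc⟩

theorem IsBox.nonempty {B : Set (Fin d → ℝ)} (hB : IsBox B) : B.Nonempty := by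
  obtain ⟨a, b, hab, rfl⟩ := hB
  exact ⟨a, fun i => left_mem_Icc.2 (hab i)⟩

theorem IsBox.image_eval {B : Set (Fin d → ℝ)} (hB : IsBox B) :
    ∃ a b : Fin d → ℝ, ∀ t, (fun x => x t) '' B = Icc (a t) (b t) := by
  have hne := hB.nonempty
  obtain ⟨a, b, -, rfl⟩ := hB
  refine ⟨a, b, fun t => ?_⟩
  have hpi : {x : Fin d → ℝ | ∀ i, x i ∈ Icc (a i) (b i)} =
      pi univ fun i => Icc (a i) (b i) := by
    ext x
    exact ⟨fun h i _ => h i, fun h i => h i (mem_univ i)⟩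
  rw [hpi] at hne ⊢
  exact eval_image_univ_pi hne

theorem exists_seq_pairwise_disjoint_image_eval {F : Set (Set (Fin d → ℝ))}
    (hbox : ∀ R ∈ F, IsBox R) (hnp : ¬ PiercedByHyperplanes F) :
    ∃ R : ℕ → Set (Fin d → ℝ), (∀ n, R n ∈ F) ∧
      Pairwise fun i j =>
        ∀ t : Fin d, Disjoint ((fun x => x t) '' R i) ((fun x => x t) '' R j) := by
  obtain ⟨U, hFU, hU⟩ := Filter.exists_ultrafilter_mem_forall_not piercedByHyperplanes_empty
    (fun _ ht _ hst => ht.mono hst) (fun _ hs _ ht => hs.union ht) hnp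
  choose! a b hab using fun R hR => (hbox R hR).image_eval
  have hsep : ∀ t, ∀ᶠ R in U, ∀ᶠ S in U,
      Disjoint (Icc (a R t) (b R t)) (Icc (a S t) (b S t)) := fun t =>
    U.eventually_eventually_disjoint_Icc _ _ fun c hc => by
      refine hU _ ?_ (piercedByHyperplanes_setOf_mem_image_eval t c)
      filter_upwards [hc, hFU] with R hcR hRF
      rwa [hab R hRF]
  have hrel : ∀ᶠ R in U, ∀ᶠ S in U, R ∈ F ∧ ∀ t : Fin d,
      Disjoint ((fun x : Fin d → ℝ => x t) '' R) ((fun x : Fin d → ℝ => x t) '' S) := by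
    filter_upwards [hFU, Filter.eventually_all.2 hsep] with R hRF hR
    filter_upwards [hFU, Filter.eventually_all.2 hR] with S hSF hS
    exact ⟨hRF, fun t => by simpa only [hab R hRF, hab S hSF] using hS t⟩
  obtain ⟨R, hR⟩ := Filter.exists_seq_forall_lt_of_eventually_eventually hrel
  refine ⟨R, fun n => (hR n (n + 1) n.lt_succ_self).1, fun i j hij => ?_⟩
  rcases hij.lt_or_gt with hlt | hgt
  exacts [(hR i j hlt).2, fun t => ((hR j i hgt).2 t).symm]

end Piercing

theorem stmt19_general (F : Set (Set (Fin 2 → ℝ)))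
    (hbox : ∀ R ∈ F, IsBox R)
    (hnp : ¬ PiercedByHyperplanes F) :
    ∃ R : ℕ → Set (Fin 2 → ℝ), (∀ n, R n ∈ F) ∧ Function.Injective R ∧
      ∀ i j : ℕ, i ≠ j → ∀ t : Fin 2,
        ((fun x => x t) '' R i) ∩ ((fun x => x t) '' R j) = ∅ := by
  obtain ⟨R, hRF, hR⟩ := exists_seq_pairwise_disjoint_image_eval hbox hnp
  refine ⟨R, hRF, fun i j hij => ?_, fun i j hij t => (hR hij t).inter_eq⟩
  by_contra hne
  have hself := hR hne 0
  rw [hij, disjoint_self, bot_eq_empty, image_eq_empty] at hself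
  exact (hbox _ (hRF j)).nonempty.ne_empty hself

theorem stmt19 (F : Set (Set (Fin 2 → ℝ))) (hF : F.Infinite)
    (hbox : ∀ R ∈ F, IsBox R)
    (hnp : ¬ PiercedByHyperplanes F) :
    ∃ R : ℕ → Set (Fin 2 → ℝ), (∀ n, R n ∈ F) ∧ Function.Injective R ∧
      ∀ i j : ℕ, i ≠ j → ∀ t : Fin 2,
        ((fun x => x t) '' R i) ∩ ((fun x => x t) '' R j) = ∅ :=
  stmt19_general F hbox hnp
end
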